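/- arXiv:1002.2604 — 2 statements merged into one kernel-verified Lean document; each statement's English description precedes it below -/
import Mathlib

section
/- For every z ∈ [0,1], the conditional probability generating function of the portfolio loss given the factors satisfies E[z^X | S] = ∏_{k=0}^N exp(S_k μ_k (Q_k(z) − 1)) almost surely. -/
/-!
Conditionally on `S`, the default counts `D_A` are independent Poisson variables with intensities
`p_A^S` and are independent of the i.i.d. exposures. Hence on each event `{D = d, S ∈ B}` the loss
is a sum of independent exposures, and `E[z^X; D = d, S ∈ B] = ∏_A H_A(z)^{d_A} P(D = d, S ∈ B)`.
Summing over `d` against the conditional Poisson pmf produces the Poisson generating functions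
`∏_A exp (p_A^S (H_A(z) - 1))`, and regrouping the exponent by sectors gives
`∏_k exp (S_k μ_k (Q_k(z) - 1))`. The model truncates the intensity at `0` (`toNNReal`); this is
harmless because `S ≥ 0` almost surely (`S_0 = 1` and the other factors are Gamma distributed).
-/

open MeasureTheory ProbabilityTheory Real Finset

/-- The CreditRisk+ model with random severities: `P` is a probability measure; the
economic factors `S 0, ..., S N` are independent, `S 0 = 1` is constant and `S (k+1)` is
Gamma distributed with shape `shape k` and rate `rate k` (scale `1 / rate k`);
conditionally on `S` the approximate default indicators `(D A)_A` are independent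
Poisson variables with intensities `p_A^S = p A * ∑ k, w A k * S k` (this is expressed by
the factorization of the joint conditional pmf); for each obligor `A` the exposures
`E A i`, `i = 0, 1, 2, ...` are i.i.d. copies of `ℰ_A := E A 0`, and the whole family of
exposures is mutually independent and independent of `(D, S)`. -/
def IsCRModel {Ω : Type} [MeasurableSpace Ω] (P : Measure Ω) {N : ℕ} {𝒜 : Type}
    [Fintype 𝒜] (S : Fin (N + 1) → Ω → ℝ) (D : 𝒜 → Ω → ℕ) (E : 𝒜 → ℕ → Ω → ℕ)
    (p : 𝒜 → ℝ) (w : 𝒜 → Fin (N + 1) → ℝ) (shape rate : Fin N → ℝ) : Prop :=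
  IsProbabilityMeasure P ∧
  (∀ k, Measurable (S k)) ∧ (∀ A, Measurable (D A)) ∧ (∀ A i, Measurable (E A i)) ∧
  (∀ ω, S 0 ω = 1) ∧
  iIndepFun S P ∧
  (∀ k : Fin N, P.map (S k.succ) = gammaMeasure (shape k) (rate k)) ∧
  (∀ (d : 𝒜 → ℕ) (B : Set (Fin (N + 1) → ℝ)), MeasurableSet B →
    P ({ω | ∀ A, D A ω = d A} ∩ {ω | (fun k => S k ω) ∈ B})
      = ∫⁻ ω in {ω | (fun k => S k ω) ∈ B},
          ∏ A, ENNReal.ofReal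
            (poissonPMFReal (p A * ∑ k, w A k * S k ω).toNNReal (d A)) ∂P) ∧
  (∀ A i, P.map (E A i) = P.map (E A 0)) ∧
  iIndepFun (β := fun j : (𝒜 × ℕ) ⊕ Unit =>
      Sum.elim (fun _ => ℕ) (fun _ => ((𝒜 → ℕ) × (Fin (N + 1) → ℝ))) j)
    (m := fun j => Sum.rec (fun _ => inferInstanceAs (MeasurableSpace ℕ))
      (fun _ => inferInstanceAs (MeasurableSpace ((𝒜 → ℕ) × (Fin (N + 1) → ℝ)))) j)
    (fun j => Sum.rec (fun Ai => E Ai.1 Ai.2)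
      (fun _ ω => ((fun A => D A ω), (fun k => S k ω))) j) P

/-- The portfolio loss `X = ∑ A, ∑_{i=1}^{D A} ℰ_{A,i}`. -/
def portfolioLoss {Ω : Type} {𝒜 : Type} [Fintype 𝒜]
    (D : 𝒜 → Ω → ℕ) (E : 𝒜 → ℕ → Ω → ℕ) (ω : Ω) : ℕ :=
  ∑ A, ∑ i ∈ Finset.range (D A ω), E A i ω

/-- The probability generating function `z ↦ 𝔼[z^Y]` of an `ℕ`-valued random variable. -/
noncomputable def pgfN {Ω : Type} [MeasurableSpace Ω] (P : Measure Ω) (Y : Ω → ℕ)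
    (z : ℝ) : ℝ :=
  ∫ ω, z ^ Y ω ∂P

/-- The sector default intensity `μ_k = ∑ A, w A k * p A`. -/
def sectorIntensity {𝒜 : Type} [Fintype 𝒜] {N : ℕ} (p : 𝒜 → ℝ)
    (w : 𝒜 → Fin (N + 1) → ℝ) (k : Fin (N + 1)) : ℝ :=
  ∑ A, w A k * p A

/-- The sector polynomial `Q_k(z) = μ_k⁻¹ * ∑ A, w A k * p A * H_A(z)`, where
`H_A` is the pgf of `ℰ_A = E A 0`. -/
noncomputable def sectorPoly {Ω : Type} {𝒜 : Type} [MeasurableSpace Ω] [Fintype 𝒜]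
    {N : ℕ} (P : Measure Ω) (E : 𝒜 → ℕ → Ω → ℕ) (p : 𝒜 → ℝ)
    (w : 𝒜 → Fin (N + 1) → ℝ) (k : Fin (N + 1)) (z : ℝ) : ℝ :=
  (sectorIntensity p w k)⁻¹ * ∑ A, w A k * p A * pgfN P (E A 0) z

/-- The `j`-th unit vector in `ℝ^N`. -/
def unitVec {N : ℕ} (j : Fin N) : Fin N → ℝ := fun k => if k = j then 1 else 0

open scoped ENNReal NNReal

universe u

theorem ENNReal.prod_tsum_eq_tsum_pi {ι κ : Type*} [Fintype ι] (f : ι → κ → ℝ≥0∞) :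
    ∏ i, ∑' n, f i n = ∑' d : ι → κ, ∏ i, f i (d i) := by
  revert f
  refine Fintype.induction_empty_option
    (P := fun ι _ => ∀ f : ι → κ → ℝ≥0∞, ∏ i, ∑' n, f i n = ∑' d : ι → κ, ∏ i, f i (d i))
    ?_ ?_ ?_ ι
  · intro α β _ e ih f
    let _ : Fintype α := Fintype.ofEquiv β e.symm
    rw [← e.prod_comp, ih, ← (e.arrowCongr (Equiv.refl κ)).tsum_eq]
    refine tsum_congr fun d => ?_
    rw [← e.prod_comp]
    simp [Equiv.arrowCongr]
  · simp
  · intro α _ ih f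
    rw [← (Equiv.piOptionEquivProd (β := fun _ => κ)).symm.tsum_eq, ENNReal.tsum_prod',
      Fintype.prod_option, ih, ← ENNReal.tsum_mul_right]
    simp [Fintype.prod_option, ENNReal.tsum_mul_left]

theorem hasSum_pow_mul_poissonPMFReal (r : ℝ≥0) (c : ℝ) :
    HasSum (fun n => c ^ n * poissonPMFReal r n) (exp (r * (c - 1))) := by
  have h := (NormedSpace.expSeries_div_hasSum_exp ((r : ℝ) * c)).mul_left (exp (-r))
  rw [← exp_eq_exp_ℝ, ← exp_add, show -(r : ℝ) + r * c = r * (c - 1) by ring] at h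
  refine h.congr_fun fun n => ?_
  unfold poissonPMFReal
  ring

theorem tsum_ofReal_pow_mul_poissonPMFReal (r : ℝ≥0) {c : ℝ} (hc : 0 ≤ c) :
    ∑' n, ENNReal.ofReal (c ^ n * poissonPMFReal r n) = ENNReal.ofReal (exp (r * (c - 1))) := by
  rw [← ENNReal.ofReal_tsum_of_nonneg (fun n => by unfold poissonPMFReal; positivity)
    (hasSum_pow_mul_poissonPMFReal r c).summable, (hasSum_pow_mul_poissonPMFReal r c).tsum_eq]

theorem gammaMeasure_Iio_zero (a r : ℝ) : gammaMeasure a r (Set.Iio 0) = 0 := by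
  rw [gammaMeasure, withDensity_apply _ measurableSet_Iio,
    setLIntegral_congr_fun measurableSet_Iio (fun x (hx : x < 0) => gammaPDF_of_neg hx),
    lintegral_zero]

theorem Measurable.apply_of_countable {Ω β γ : Type*} [MeasurableSpace Ω] [MeasurableSpace β]
    [MeasurableSpace γ] [Countable β] [MeasurableSingletonClass β] {f : β → Ω → γ}
    (hf : ∀ b, Measurable (f b)) {g : Ω → β} (hg : Measurable g) :
    Measurable fun ω => f (g ω) ω :=
  (measurable_from_prod_countable_left (f := fun q : Ω × β => f q.2 q.1) hf).comp
    (measurable_id.prodMk hg)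

theorem tsum_prod_ofReal_pow_mul_poissonPMFReal {ι : Type*} [Fintype ι] (r : ι → ℝ≥0)
    {c : ι → ℝ} (hc : ∀ i, 0 ≤ c i) :
    ∑' d : ι → ℕ, ∏ i, ENNReal.ofReal (c i ^ d i * poissonPMFReal (r i) (d i))
      = ∏ i, ENNReal.ofReal (exp (r i * (c i - 1))) := by
  rw [← ENNReal.prod_tsum_eq_tsum_pi fun i n => ENNReal.ofReal (c i ^ n * poissonPMFReal (r i) n)]
  exact prod_congr rfl fun i _ => tsum_ofReal_pow_mul_poissonPMFReal (r i) (hc i)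

theorem setIntegral_prod_comp_of_iIndepFun_sum {Ω ι : Type*} {β γ : Type u} [MeasurableSpace Ω]
    {P : Measure Ω} [IsProbabilityMeasure P] [MeasurableSpace β] [MeasurableSpace γ]
    {X : ι → Ω → β} {V : Ω → γ}
    -- the family `X i`, `i : ι`, together with `V` is independent
    (hind : iIndepFun (β := fun j : ι ⊕ Unit => Sum.elim (fun _ => β) (fun _ => γ) j)
      (m := fun j => Sum.rec (fun _ => ‹MeasurableSpace β›) (fun _ => ‹MeasurableSpace γ›) j)
      (fun j => Sum.rec X (fun _ => V) j) P)
    (hX : ∀ i, Measurable (X i)) (hV : Measurable V) {f : ι → β → ℝ}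
    (hf : ∀ i, Measurable (f i)) {C : Set γ} (hC : MeasurableSet C) (J : Finset ι) :
    ∫ ω in V ⁻¹' C, ∏ i ∈ J, f i (X i ω) ∂P
      = P.real (V ⁻¹' C) * ∏ i ∈ J, ∫ ω, f i (X i ω) ∂P := by
  classical
  let Y (j : ι ⊕ Unit) (ω : Ω) : ℝ :=
    Sum.elim (fun i => f i (X i ω)) (fun _ => C.indicator 1 (V ω)) j
  have hY : iIndepFun Y P := by
    let g (j : ι ⊕ Unit) : Sum.elim (fun _ => β) (fun _ => γ) j → ℝ :=
      Sum.rec (motive := fun j => Sum.elim (fun _ => β) (fun _ => γ) j → ℝ) f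
        (fun _ => C.indicator 1) j
    convert hind.comp g (by
      rintro (i | u)
      exacts [hf i, (measurable_one.indicator hC : Measurable (C.indicator (1 : γ → ℝ)))])
    rename_i j
    cases j <;> rfl
  let K : Finset (ι ⊕ Unit) := insert (Sum.inr ()) (J.map .inl)
  have hK := (hY.precomp (Subtype.val_injective : Function.Injective ((↑) : K → ι ⊕ Unit)))
    |>.integral_fun_prod_eq_prod_integral (by
      rintro ⟨i | u, -⟩
      exacts [((hf i).comp (hX i)).aestronglyMeasurable,
        ((measurable_one.indicator hC).comp hV).aestronglyMeasurable])
  simp only [fun ω => Finset.prod_coe_sort K (Y · ω),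
    Finset.prod_coe_sort K (fun j => ∫ ω, Y j ω ∂P), K,
    Finset.prod_insert (by simp : Sum.inr () ∉ J.map .inl), Finset.prod_map] at hK
  have hYC : ∀ ω, Y (.inr ()) ω = (V ⁻¹' C).indicator 1 ω := fun ω => rfl
  simp only [hYC, integral_indicator_one (hV hC)] at hK
  rw [← integral_indicator (hV hC)]
  refine Eq.trans ?_ hK
  congr with ω
  by_cases h : ω ∈ V ⁻¹' C <;> simp [h, Y]

theorem setLIntegral_eq_tsum_setLIntegral_fiber {Ω α : Type*} [MeasurableSpace Ω]
    [MeasurableSpace α] [Countable α] [MeasurableSingletonClass α] {μ : Measure Ω} {X : Ω → α}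
    (hX : Measurable X) (s : Set Ω) (f : Ω → ℝ≥0∞) :
    ∫⁻ ω in s, f ω ∂μ = ∑' a, ∫⁻ ω in X ⁻¹' {a} ∩ s, f ω ∂μ := by
  have h := lintegral_iUnion (μ := μ.restrict s) (fun a => hX (measurableSet_singleton a))
    (pairwise_disjoint_fiber X) f
  rw [Set.iUnion_eq_univ_iff.2 fun ω => ⟨X ω, rfl⟩, Measure.restrict_univ] at h
  simpa only [Measure.restrict_restrict (hX (measurableSet_singleton _))] using h

theorem integrable_pow_of_mem_Icc {Ω : Type*} [MeasurableSpace Ω] {P : Measure Ω}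
    [IsFiniteMeasure P] {Y : Ω → ℕ} (hY : Measurable Y) {z : ℝ} (hz : z ∈ Set.Icc (0 : ℝ) 1) :
    Integrable (fun ω => z ^ Y ω) P := by
  refine .of_bound (Measurable.of_discrete.comp hY).aestronglyMeasurable 1 (.of_forall fun ω => ?_)
  rw [norm_pow, Real.norm_of_nonneg hz.1]
  exact pow_le_one₀ hz.1 hz.2

theorem ae_eq_condExp_of_forall_setLIntegral_eq {Ω : Type*} {m m₀ : MeasurableSpace Ω}
    {P : Measure Ω} (hm : m ≤ m₀) [SigmaFinite (P.trim hm)] {f g : Ω → ℝ}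
    (hf : Integrable f P) (hg : Integrable g P) (hf₀ : 0 ≤ᵐ[P] f) (hg₀ : 0 ≤ᵐ[P] g)
    (hgm : AEStronglyMeasurable[m] g P)
    (h : ∀ s, MeasurableSet[m] s →
      ∫⁻ ω in s, ENNReal.ofReal (f ω) ∂P = ∫⁻ ω in s, ENNReal.ofReal (g ω) ∂P) :
    g =ᵐ[P] P[f|m] :=
  ae_eq_condExp_of_forall_setIntegral_eq hm hf (fun _ _ _ => hg.integrableOn)
    (fun s hs _ => by
      rw [integral_eq_lintegral_of_nonneg_ae (ae_restrict_of_ae hg₀) hg.1.restrict,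
        integral_eq_lintegral_of_nonneg_ae (ae_restrict_of_ae hf₀) hf.1.restrict, h s hs])
    hgm

theorem pgfN_nonneg {Ω : Type} [MeasurableSpace Ω] (P : Measure Ω) (Y : Ω → ℕ) {z : ℝ}
    (hz : 0 ≤ z) : 0 ≤ pgfN P Y z :=
  integral_nonneg fun _ => pow_nonneg hz _

theorem pgfN_le_one {Ω : Type} [MeasurableSpace Ω] (P : Measure Ω) [IsProbabilityMeasure P]
    (Y : Ω → ℕ) {z : ℝ} (hz : z ∈ Set.Icc (0 : ℝ) 1) : pgfN P Y z ≤ 1 := by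
  simpa [pgfN] using integral_mono_of_nonneg (μ := P) (.of_forall fun _ => pow_nonneg hz.1 _)
    (integrable_const 1) (.of_forall fun _ => pow_le_one₀ hz.1 hz.2)

theorem measurable_portfolioLoss {Ω 𝒜 : Type} [MeasurableSpace Ω] [Fintype 𝒜]
    {D : 𝒜 → Ω → ℕ} {E : 𝒜 → ℕ → Ω → ℕ} (hD : ∀ A, Measurable (D A))
    (hE : ∀ A i, Measurable (E A i)) : Measurable (portfolioLoss D E) :=
  Finset.measurable_sum _ fun A _ =>
    Measurable.apply_of_countable (f := fun n ω => ∑ i ∈ range n, E A i ω)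
      (fun _ => Finset.measurable_sum _ fun i _ => hE A i) (hD A)

theorem sectorIntensity_mul_sectorPoly_sub_one {Ω 𝒜 : Type} [MeasurableSpace Ω] [Fintype 𝒜]
    {N : ℕ} (P : Measure Ω) (E : 𝒜 → ℕ → Ω → ℕ) (p : 𝒜 → ℝ) (w : 𝒜 → Fin (N + 1) → ℝ)
    {k : Fin (N + 1)} (hμ : sectorIntensity p w k ≠ 0) (z : ℝ) :
    sectorIntensity p w k * (sectorPoly P E p w k z - 1)
      = ∑ A, w A k * p A * (pgfN P (E A 0) z - 1) := by
  rw [sectorPoly, mul_sub, ← mul_assoc, mul_inv_cancel₀ hμ, one_mul, mul_one, sectorIntensity,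
    ← Finset.sum_sub_distrib]
  simp only [mul_sub, mul_one]

theorem sum_sector_eq_sum_obligor {Ω 𝒜 : Type} [MeasurableSpace Ω] [Fintype 𝒜]
    {N : ℕ} (P : Measure Ω) (E : 𝒜 → ℕ → Ω → ℕ) (p : 𝒜 → ℝ) (w : 𝒜 → Fin (N + 1) → ℝ)
    (hμ : ∀ k, sectorIntensity p w k ≠ 0) (s : Fin (N + 1) → ℝ) (z : ℝ) :
    ∑ k, s k * sectorIntensity p w k * (sectorPoly P E p w k z - 1)
      = ∑ A, (p A * ∑ k, w A k * s k) * (pgfN P (E A 0) z - 1) := by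
  simp_rw [mul_assoc (s _), sectorIntensity_mul_sectorPoly_sub_one P E p w (hμ _), Finset.mul_sum]
  rw [Finset.sum_comm]
  refine Finset.sum_congr rfl fun A _ => ?_
  rw [Finset.sum_mul]
  exact Finset.sum_congr rfl fun k _ => by ring

section CRModel

variable {Ω 𝒜 : Type} [MeasurableSpace Ω] [Fintype 𝒜] {N : ℕ} {P : Measure Ω}
  {S : Fin (N + 1) → Ω → ℝ} {D : 𝒜 → Ω → ℕ} {E : 𝒜 → ℕ → Ω → ℕ} {p : 𝒜 → ℝ}
  {w : 𝒜 → Fin (N + 1) → ℝ} {shape rate : Fin N → ℝ}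

theorem IsCRModel.ae_nonneg_factor (hM : IsCRModel P S D E p w shape rate) :
    ∀ᵐ ω ∂P, ∀ k, 0 ≤ S k ω := by
  obtain ⟨-, hSm, -, -, hS0, -, hSgamma, -⟩ := hM
  rw [ae_all_iff]
  intro k
  cases k using Fin.cases with
  | zero => exact .of_forall fun ω => (hS0 ω).symm ▸ zero_le_one
  | succ j =>
    have h := gammaMeasure_Iio_zero (shape j) (rate j)
    rw [← hSgamma j, Measure.map_apply (hSm _) measurableSet_Iio] at h
    exact (measure_eq_zero_iff_ae_notMem.1 h).mono fun ω hω => not_lt.1 hω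

theorem IsCRModel.integral_pow_exposure (hM : IsCRModel P S D E p w shape rate) (z : ℝ)
    (A : 𝒜) (i : ℕ) : ∫ ω, z ^ E A i ω ∂P = pgfN P (E A 0) z := by
  obtain ⟨-, -, -, hEm, -, -, -, -, hEid, -⟩ := hM
  rw [pgfN, ← integral_map (hEm A i).aemeasurable Measurable.of_discrete.aestronglyMeasurable,
    hEid A i, integral_map (hEm A 0).aemeasurable Measurable.of_discrete.aestronglyMeasurable]

theorem IsCRModel.setIntegral_pow_portfolioLoss_fiber (hM : IsCRModel P S D E p w shape rate)
    (z : ℝ) (d : 𝒜 → ℕ) {B : Set (Fin (N + 1) → ℝ)} (hB : MeasurableSet B) :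
    ∫ ω in {ω | ∀ A, D A ω = d A} ∩ {ω | (fun k => S k ω) ∈ B}, z ^ portfolioLoss D E ω ∂P
      = P.real ({ω | ∀ A, D A ω = d A} ∩ {ω | (fun k => S k ω) ∈ B})
        * ∏ A, pgfN P (E A 0) z ^ d A := by
  classical
  obtain ⟨hP, hSm, hDm, hEm, -, -, -, -, -, hind⟩ := id hM
  let J : Finset (𝒜 × ℕ) := univ.biUnion fun A => {A} ×ˢ range (d A)
  have hJ (F : 𝒜 × ℕ → ℝ) : ∏ Ai ∈ J, F Ai = ∏ A, ∏ i ∈ range (d A), F (A, i) :=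
    Finset.prod_finset_product _ _ _ fun Ai => by
      simpa [J] using ⟨by rintro ⟨A, i, h, rfl⟩; exact h, fun h => ⟨_, _, h, rfl⟩⟩
  let V (ω : Ω) : (𝒜 → ℕ) × (Fin (N + 1) → ℝ) := (fun A => D A ω, fun k => S k ω)
  have hV : Measurable V := (measurable_pi_lambda _ hDm).prodMk (measurable_pi_lambda _ hSm)
  have hset : {ω | ∀ A, D A ω = d A} ∩ {ω | (fun k => S k ω) ∈ B} = V ⁻¹' ({d} ×ˢ B) := by
    ext ω
    simp [V, funext_iff]
  have hfiber : MeasurableSet ({ω | ∀ A, D A ω = d A} ∩ {ω | (fun k => S k ω) ∈ B}) :=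
    hset ▸ hV (measurableSet_singleton d |>.prod hB)
  calc ∫ ω in {ω | ∀ A, D A ω = d A} ∩ {ω | (fun k => S k ω) ∈ B}, z ^ portfolioLoss D E ω ∂P
      = ∫ ω in V ⁻¹' ({d} ×ˢ B), ∏ Ai ∈ J, z ^ E Ai.1 Ai.2 ω ∂P := by
        rw [← hset]
        refine setIntegral_congr_fun hfiber fun ω hω => ?_
        have hDω : ∀ A, D A ω = d A := hω.1
        simp only [hJ, portfolioLoss, prod_pow_eq_pow_sum, hDω]
    _ = P.real (V ⁻¹' ({d} ×ˢ B)) * ∏ Ai ∈ J, ∫ ω, z ^ E Ai.1 Ai.2 ω ∂P :=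
        setIntegral_prod_comp_of_iIndepFun_sum hind (fun Ai => hEm Ai.1 Ai.2) hV
          (fun _ => Measurable.of_discrete) (measurableSet_singleton d |>.prod hB) J
    _ = _ := by
        rw [← hset, hJ]
        simp only [hM.integral_pow_exposure, prod_const, card_range]

theorem IsCRModel.setLIntegral_pow_portfolioLoss_fiber (hM : IsCRModel P S D E p w shape rate)
    {z : ℝ} (hz : z ∈ Set.Icc (0 : ℝ) 1) (d : 𝒜 → ℕ) {B : Set (Fin (N + 1) → ℝ)}
    (hB : MeasurableSet B) :
    ∫⁻ ω in {ω | ∀ A, D A ω = d A} ∩ {ω | (fun k => S k ω) ∈ B},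
        ENNReal.ofReal (z ^ portfolioLoss D E ω) ∂P
      = ENNReal.ofReal (∏ A, pgfN P (E A 0) z ^ d A)
        * P ({ω | ∀ A, D A ω = d A} ∩ {ω | (fun k => S k ω) ∈ B}) := by
  obtain ⟨hP, -, hDm, hEm, -⟩ := id hM
  rw [← ofReal_integral_eq_lintegral_ofReal
      (integrable_pow_of_mem_Icc (measurable_portfolioLoss hDm hEm) hz).integrableOn
      (.of_forall fun _ => pow_nonneg hz.1 _),
    hM.setIntegral_pow_portfolioLoss_fiber z d hB, mul_comm,
    ENNReal.ofReal_mul (prod_nonneg fun A _ => pow_nonneg (pgfN_nonneg P _ hz.1) _),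
    ofReal_measureReal]

theorem IsCRModel.setLIntegral_pow_portfolioLoss (hM : IsCRModel P S D E p w shape rate)
    {z : ℝ} (hz : z ∈ Set.Icc (0 : ℝ) 1) {B : Set (Fin (N + 1) → ℝ)} (hB : MeasurableSet B) :
    ∫⁻ ω in {ω | (fun k => S k ω) ∈ B}, ENNReal.ofReal (z ^ portfolioLoss D E ω) ∂P
      = ∫⁻ ω in {ω | (fun k => S k ω) ∈ B}, ∏ A, ENNReal.ofReal
          (exp ((p A * ∑ k, w A k * S k ω).toNNReal * (pgfN P (E A 0) z - 1))) ∂P := by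
  obtain ⟨-, hSm, hDm, -, -, -, -, hcond, -⟩ := id hM
  have hH : ∀ A, 0 ≤ pgfN P (E A 0) z := fun A => pgfN_nonneg P _ hz.1
  have hpois (d : 𝒜 → ℕ) : Measurable fun ω =>
      ∏ A, ENNReal.ofReal (poissonPMFReal (p A * ∑ k, w A k * S k ω).toNNReal (d A)) := by
    unfold poissonPMFReal
    fun_prop
  have hfiber (d : 𝒜 → ℕ) : (fun ω A => D A ω) ⁻¹' {d} = {ω | ∀ A, D A ω = d A} := by
    ext ω
    simp [funext_iff]
  calc ∫⁻ ω in {ω | (fun k => S k ω) ∈ B}, ENNReal.ofReal (z ^ portfolioLoss D E ω) ∂P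
      = ∑' d : 𝒜 → ℕ, ENNReal.ofReal (∏ A, pgfN P (E A 0) z ^ d A)
          * P ({ω | ∀ A, D A ω = d A} ∩ {ω | (fun k => S k ω) ∈ B}) := by
        rw [setLIntegral_eq_tsum_setLIntegral_fiber (measurable_pi_lambda _ hDm)]
        refine tsum_congr fun d => ?_
        rw [hfiber, hM.setLIntegral_pow_portfolioLoss_fiber hz d hB]
    _ = ∑' d : 𝒜 → ℕ, ∫⁻ ω in {ω | (fun k => S k ω) ∈ B},
          ENNReal.ofReal (∏ A, pgfN P (E A 0) z ^ d A)
          * ∏ A, ENNReal.ofReal (poissonPMFReal (p A * ∑ k, w A k * S k ω).toNNReal (d A)) ∂P := by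
        refine tsum_congr fun d => ?_
        rw [hcond d B hB, lintegral_const_mul _ (hpois d)]
    _ = ∫⁻ ω in {ω | (fun k => S k ω) ∈ B}, ∑' d : 𝒜 → ℕ, ∏ A, ENNReal.ofReal
          (pgfN P (E A 0) z ^ d A * poissonPMFReal (p A * ∑ k, w A k * S k ω).toNNReal (d A))
          ∂P := by
        rw [← lintegral_tsum fun d => ((hpois d).const_mul _).aemeasurable]
        refine lintegral_congr fun ω => tsum_congr fun d => ?_
        rw [ENNReal.ofReal_prod_of_nonneg fun A _ => pow_nonneg (hH A) _, ← prod_mul_distrib]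
        exact prod_congr rfl fun A _ => (ENNReal.ofReal_mul (pow_nonneg (hH A) _)).symm
    _ = _ := by
        simp only [tsum_prod_ofReal_pow_mul_poissonPMFReal _ hH]

end CRModel

theorem cond_pgf_given_factors_general
    {Ω : Type} {𝒜 : Type} [MeasurableSpace Ω] [Fintype 𝒜] {N : ℕ}
    (P : Measure Ω) (S : Fin (N + 1) → Ω → ℝ) (D : 𝒜 → Ω → ℕ) (E : 𝒜 → ℕ → Ω → ℕ)
    (p : 𝒜 → ℝ) (w : 𝒜 → Fin (N + 1) → ℝ) (α : Fin N → ℝ)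
    (hp : ∀ A, 0 ≤ p A)
    (hw0 : ∀ A k, 0 ≤ w A k)
    (hM : IsCRModel P S D E p w α α)
    (hμ : ∀ k, 0 < sectorIntensity p w k)
    (z : ℝ) (hz : z ∈ Set.Icc (0 : ℝ) 1) :
    P[(fun ω => z ^ portfolioLoss D E ω) |
        MeasurableSpace.comap (fun ω k => S k ω) inferInstance]
      =ᵐ[P] fun ω => ∏ k : Fin (N + 1),
          Real.exp (S k ω * sectorIntensity p w k * (sectorPoly P E p w k z - 1)) := by
  obtain ⟨hP, hSm, hDm, hEm, -⟩ := id hM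
  have hπ : Measurable fun ω k => S k ω := measurable_pi_lambda _ hSm
  have hpS : ∀ᵐ ω ∂P, ∀ A, 0 ≤ p A * ∑ k, w A k * S k ω :=
    hM.ae_nonneg_factor.mono fun ω hS A =>
      mul_nonneg (hp A) (sum_nonneg fun k _ => mul_nonneg (hw0 A k) (hS k))
  simp only [← exp_sum, sum_sector_eq_sum_obligor P E p w fun k => (hμ k).ne']
  refine (ae_eq_condExp_of_forall_setLIntegral_eq hπ.comap_le
    (integrable_pow_of_mem_Icc (measurable_portfolioLoss hDm hEm) hz) ?_
    (.of_forall fun _ => pow_nonneg hz.1 _) (.of_forall fun _ => (exp_pos _).le) ?_ ?_).symm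
  · refine .of_bound (by fun_prop) 1 (hpS.mono fun ω hω => ?_)
    rw [Real.norm_of_nonneg (exp_pos _).le, exp_le_one_iff]
    exact sum_nonpos fun A _ => mul_nonpos_of_nonneg_of_nonpos (hω A)
      (by linarith [pgfN_le_one P (E A 0) hz])
  · exact ((by fun_prop : Measurable fun s : Fin (N + 1) → ℝ =>
      exp (∑ A, (p A * ∑ k, w A k * s k) * (pgfN P (E A 0) z - 1))).comp
        (Measurable.of_comap_le le_rfl)).aestronglyMeasurable
  · rintro _ ⟨B, hB, rfl⟩
    refine (hM.setLIntegral_pow_portfolioLoss hz hB).trans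
      (setLIntegral_congr_fun_ae (hπ hB) (hpS.mono fun ω hω _ => ?_))
    simp only [exp_sum, ENNReal.ofReal_prod_of_nonneg fun A _ => (exp_pos _).le,
      Real.coe_toNNReal _ (hω _)]

/-- Conditionally on the factors `S`, the pgf of the portfolio loss is
`𝔼[z ^ X | S] = ∏ k, exp (S k * μ_k * (Q_k z - 1))` a.s., for every `z ∈ [0,1]`. -/
theorem cond_pgf_given_factors
    {Ω : Type} {𝒜 : Type} [MeasurableSpace Ω] [Fintype 𝒜] {N : ℕ} (hN : 1 ≤ N)
    (P : Measure Ω) (S : Fin (N + 1) → Ω → ℝ) (D : 𝒜 → Ω → ℕ) (E : 𝒜 → ℕ → Ω → ℕ)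
    (p : 𝒜 → ℝ) (w : 𝒜 → Fin (N + 1) → ℝ) (α : Fin N → ℝ)
    (hα : ∀ k, 0 < α k) (hp : ∀ A, 0 ≤ p A)
    (hw0 : ∀ A k, 0 ≤ w A k) (hw1 : ∀ A k, w A k ≤ 1)
    (hwsum : ∀ A, ∑ k, w A k = 1)
    (hM : IsCRModel P S D E p w α α)
    (hμ : ∀ k, 0 < sectorIntensity p w k)
    (z : ℝ) (hz : z ∈ Set.Icc (0 : ℝ) 1) :
    P[(fun ω => z ^ portfolioLoss D E ω) |
        MeasurableSpace.comap (fun ω k => S k ω) inferInstance]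
      =ᵐ[P] fun ω => ∏ k : Fin (N + 1),
          Real.exp (S k ω * sectorIntensity p w k * (sectorPoly P E p w k z - 1)) :=
  cond_pgf_given_factors_general P S D E p w α hp hw0 hM hμ z hz
end

section
/- For every z ∈ [0,1] and every pair of indices: (i) E[S_0² · ∏_{k=0}^N exp(S_k μ_k (Q_k(z) − 1))] = G_X^{(α)}(z); (ii) for j ≥ 1, E[S_0 S_j · ∏_{k=0}^N exp(S_k μ_k (Q_k(z) − 1))] = G_X^{(α+e_j)}(z); (iii) for 1 ≤ i ≠ j ≤ N, E[S_i S_j · ∏_{k=0}^N exp(S_k μ_k (Q_k(z) − 1))] = G_X^{(α+e_i+e_j)}(z); (iv) for j ≥ 1, E[S_j² · ∏_{k=0}^N exp(S_k μ_k (Q_k(z) − 1))] = ((α_j + 1)/α_j) · G_X^{(α+2e_j)}(z). -/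
/-!
Since the factors are independent and `S₀ = 1`, each expectation splits into
`∏ₖ 𝔼[S_kⁿᵏ e^{c_k S_k}]` with `c_k = μ_k (Q_k(z) - 1) ≤ 0`. Multiplying the `Gamma(a, r)`
density by `xⁿ e^{cx}` gives a multiple of the `Gamma(a + n, r - c)` density, whence
`𝔼[Sⁿ e^{cS}] = Γ(a + n) / (Γ(a) rⁿ) · (r / (r - c))^{a + n}`. For `r = a = α_k` the base
`a / (a - c_k)` is `(1 - δ_k) / (1 - δ_k Q_k(z))`, and the moment factor is `1` for `n ≤ 1`
and `(a + 1) / a` for `n = 2`.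
-/

open MeasureTheory ProbabilityTheory Real Finset

/-- The stressed generating function
`G_X^(β)(z) = exp (μ₀ (Q₀ z - 1)) * ∏ k, ((1 - δ_k)/(1 - δ_k Q_k z)) ^ β_k`, where
`δ_k = μ_k/(μ_k + α_k)`. -/
noncomputable def Gstress {N : ℕ} (α β : Fin N → ℝ) (μk : Fin (N + 1) → ℝ)
    (Q : Fin (N + 1) → ℝ → ℝ) (z : ℝ) : ℝ :=
  Real.exp (μk 0 * (Q 0 z - 1))
    * ∏ k : Fin N,
        ((1 - μk k.succ / (μk k.succ + α k))
          / (1 - μk k.succ / (μk k.succ + α k) * Q k.succ z)) ^ (β k)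

noncomputable def gammaMoment (a r : ℝ) (n : ℕ) : ℝ :=
  Gamma (a + n) / (Gamma a * r ^ n)

lemma gammaMoment_zero {a : ℝ} (ha : 0 < a) (r : ℝ) : gammaMoment a r 0 = 1 := by
  simp [gammaMoment, (Gamma_pos_of_pos ha).ne']

lemma gammaMoment_one {a : ℝ} (ha : 0 < a) : gammaMoment a a 1 = 1 := by
  rw [gammaMoment, Nat.cast_one, Gamma_add_one ha.ne', pow_one]
  field_simp [(Gamma_pos_of_pos ha).ne']

lemma gammaMoment_two {a : ℝ} (ha : 0 < a) : gammaMoment a a 2 = (a + 1) / a := by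
  have h : a + (2 : ℕ) = (a + 1) + 1 := by push_cast; ring
  rw [gammaMoment, h, Gamma_add_one (by positivity), Gamma_add_one ha.ne']
  field_simp [(Gamma_pos_of_pos ha).ne']

lemma integral_gammaPDFReal_eq_one {a r : ℝ} (ha : 0 < a) (hr : 0 < r) :
    ∫ x, gammaPDFReal a r x = 1 := by
  rw [integral_eq_lintegral_of_nonneg_ae (ae_of_all _ (gammaPDFReal_nonneg ha hr))
    (measurable_gammaPDFReal a r).aestronglyMeasurable]
  exact (congrArg ENNReal.toReal (lintegral_gammaPDF_eq_one ha hr)).trans ENNReal.toReal_one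

lemma gammaPDFReal_mul_pow_mul_exp {a r c x : ℝ} (ha : 0 < a) (hr : 0 < r) (hc : c < r)
    (hx : x ≠ 0) (n : ℕ) :
    gammaPDFReal a r x * (x ^ n * exp (x * c))
      = gammaMoment a r n * (r / (r - c)) ^ (a + n) * gammaPDFReal (a + n) (r - c) x := by
  unfold gammaPDFReal
  split_ifs with h0
  · have hrc : 0 < r - c := by linarith
    rw [div_rpow hr.le hrc.le, rpow_add_natCast hr.ne', gammaMoment,
      show a + n - 1 = (a - 1) + n by ring, rpow_add_natCast hx,
      show -((r - c) * x) = -(r * x) + x * c by ring, exp_add]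
    field_simp [(Gamma_pos_of_pos ha).ne', (Gamma_pos_of_pos (by positivity : 0 < a + n)).ne',
      (rpow_pos_of_pos hrc (a + n)).ne']
  · simp

lemma integral_pow_mul_exp_gammaMeasure {a r c : ℝ} (ha : 0 < a) (hr : 0 < r) (hc : c < r)
    (n : ℕ) :
    ∫ x, x ^ n * exp (x * c) ∂gammaMeasure a r = gammaMoment a r n * (r / (r - c)) ^ (a + n) := by
  rw [gammaMeasure, integral_withDensity_eq_integral_toReal_smul (f := gammaPDF a r)
    (measurable_gammaPDFReal a r).ennreal_ofReal
    (ae_of_all _ fun _ => ENNReal.ofReal_lt_top)]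
  simp only [gammaPDF, ENNReal.toReal_ofReal (gammaPDFReal_nonneg ha hr _), smul_eq_mul]
  rw [integral_congr_ae ((Measure.ae_ne volume 0).mono fun x hx =>
      gammaPDFReal_mul_pow_mul_exp ha hr hc hx n),
    integral_const_mul, integral_gammaPDFReal_eq_one (by positivity) (by linarith), mul_one]

lemma prod_pow_single {ι M : Type*} [Fintype ι] [DecidableEq ι] [CommMonoid M] (x : ι → M)
    (j : ι) (n : ℕ) : ∏ k, x k ^ (Pi.single j n : ι → ℕ) k = x j ^ n := by
  simp [Pi.single_apply, pow_ite]

lemma natCast_single_eq_nsmul_unitVec {N : ℕ} (j : Fin N) (n : ℕ) :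
    (fun k => ((Pi.single j n : Fin N → ℕ) k : ℝ)) = n • unitVec j := by
  funext k
  by_cases hk : k = j <;> simp [unitVec, hk]

lemma stress_ratio_eq {a μ q : ℝ} (hμa : μ + a ≠ 0) :
    (1 - μ / (μ + a)) / (1 - μ / (μ + a) * q) = a / (a - μ * (q - 1)) := by
  have hnum : 1 - μ / (μ + a) = a / (μ + a) := by field_simp; ring
  have hden : 1 - μ / (μ + a) * q = (a - μ * (q - 1)) / (μ + a) := by field_simp; ring
  rw [hnum, hden, div_div_div_cancel_right₀ hμa]

lemma prod_gammaMoment_self_eq_one {ι : Type*} [Fintype ι] {α : ι → ℝ} (hα : ∀ k, 0 < α k)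
    {m : ι → ℕ} (hm : ∀ k, m k ≤ 1) : ∏ k, gammaMoment (α k) (α k) (m k) = 1 :=
  prod_eq_one fun k _ => by
    rcases Nat.le_one_iff_eq_zero_or_eq_one.1 (hm k) with h | h
    · rw [h, gammaMoment_zero (hα k)]
    · rw [h, gammaMoment_one (hα k)]

section FactorMoments

variable {Ω : Type*} [MeasurableSpace Ω] {P : Measure Ω} [IsProbabilityMeasure P] {N : ℕ}
  {S : Fin (N + 1) → Ω → ℝ} {α : Fin N → ℝ}

theorem integral_prod_pow_mul_prod_exp (measS : ∀ k, Measurable (S k))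
    (hS0 : ∀ ω, S 0 ω = 1) (hSind : iIndepFun S P) (hα : ∀ k, 0 < α k)
    (hgamma : ∀ k : Fin N, P.map (S k.succ) = gammaMeasure (α k) (α k))
    (m : Fin N → ℕ) (c : Fin (N + 1) → ℝ) (hc : ∀ k, c k.succ < α k) :
    ∫ ω, (∏ k : Fin N, S k.succ ω ^ m k) * ∏ k, exp (S k ω * c k) ∂P
      = exp (c 0) * ∏ k : Fin N,
          gammaMoment (α k) (α k) (m k) * (α k / (α k - c k.succ)) ^ (α k + m k) := by
  set f : (k : Fin (N + 1)) → ℝ → ℝ :=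
    Fin.cons (fun x => exp (x * c 0)) (fun k x => x ^ m k * exp (x * c k.succ)) with hf
  have hfS : ∀ ω, (∏ k : Fin N, S k.succ ω ^ m k) * ∏ k, exp (S k ω * c k)
      = ∏ k, f k (S k ω) := fun ω => by
    simp only [hf, Fin.prod_univ_succ, Fin.cons_zero, Fin.cons_succ, prod_mul_distrib]
    ring
  have hfm : ∀ k, Measurable (f k) := by
    intro k
    induction k using Fin.cases <;> simp only [hf, Fin.cons_zero, Fin.cons_succ] <;> fun_prop
  simp_rw [hfS]
  rw [hSind.integral_fun_prod_comp (fun k => (measS k).aemeasurable)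
    (fun k => (hfm k).aestronglyMeasurable), Fin.prod_univ_succ]
  congr 1
  · simp [hf, hS0]
  · refine prod_congr rfl fun k _ => ?_
    rw [← integral_map (measS k.succ).aemeasurable (hfm k.succ).aestronglyMeasurable, hgamma k]
    exact integral_pow_mul_exp_gammaMeasure (hα k) (hα k) (hc k) (m k)

theorem integral_prod_pow_mul_prod_exp_eq_Gstress (measS : ∀ k, Measurable (S k))
    (hS0 : ∀ ω, S 0 ω = 1) (hSind : iIndepFun S P) (hα : ∀ k, 0 < α k)
    (hgamma : ∀ k : Fin N, P.map (S k.succ) = gammaMeasure (α k) (α k))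
    {μk : Fin (N + 1) → ℝ} (hμ : ∀ k, 0 < μk k) {Q : Fin (N + 1) → ℝ → ℝ} {z : ℝ}
    (hQ : ∀ k, Q k z ≤ 1) (m : Fin N → ℕ) :
    ∫ ω, (∏ k : Fin N, S k.succ ω ^ m k) * ∏ k, exp (S k ω * μk k * (Q k z - 1)) ∂P
      = (∏ k, gammaMoment (α k) (α k) (m k)) * Gstress α (α + fun k => (m k : ℝ)) μk Q z := by
  have hc : ∀ k, μk k.succ * (Q k.succ z - 1) < α k := fun k =>
    (mul_nonpos_of_nonneg_of_nonpos (hμ k.succ).le (sub_nonpos.2 (hQ k.succ))).trans_lt (hα k)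
  simp only [mul_assoc (S _ _)]
  rw [integral_prod_pow_mul_prod_exp measS hS0 hSind hα hgamma m _ hc, Gstress]
  have hμα : ∀ k, μk k.succ + α k ≠ 0 := fun k => (add_pos (hμ k.succ) (hα k)).ne'
  simp only [stress_ratio_eq (hμα _), Pi.add_apply, prod_mul_distrib]
  ring

end FactorMoments

theorem factor_moments_stressed_pgf_general
    {Ω : Type} [MeasurableSpace Ω] (P : Measure Ω) [IsProbabilityMeasure P]
    {N : ℕ} (S : Fin (N + 1) → Ω → ℝ)
    (measS : ∀ k, Measurable (S k)) (hS0 : ∀ ω, S 0 ω = 1)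
    (hSind : iIndepFun S P)
    (α : Fin N → ℝ) (hα : ∀ k, 0 < α k)
    (hgamma : ∀ k : Fin N, P.map (S k.succ) = gammaMeasure (α k) (α k))
    (μk : Fin (N + 1) → ℝ) (hμ : ∀ k, 0 < μk k)
    (Q : Fin (N + 1) → ℝ → ℝ)
    (hQ : ∀ k z, z ∈ Set.Icc (0 : ℝ) 1 → Q k z ∈ Set.Icc (0 : ℝ) 1)
    (z : ℝ) (hz : z ∈ Set.Icc (0 : ℝ) 1) :
    (∫ ω, S 0 ω ^ 2 * ∏ k : Fin (N + 1), Real.exp (S k ω * μk k * (Q k z - 1)) ∂P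
        = Gstress α α μk Q z)
    ∧ (∀ j : Fin N,
        ∫ ω, S 0 ω * S j.succ ω
            * ∏ k : Fin (N + 1), Real.exp (S k ω * μk k * (Q k z - 1)) ∂P
          = Gstress α (α + unitVec j) μk Q z)
    ∧ (∀ i j : Fin N, i ≠ j →
        ∫ ω, S i.succ ω * S j.succ ω
            * ∏ k : Fin (N + 1), Real.exp (S k ω * μk k * (Q k z - 1)) ∂P
          = Gstress α (α + unitVec i + unitVec j) μk Q z)
    ∧ (∀ j : Fin N,
        ∫ ω, S j.succ ω ^ 2
            * ∏ k : Fin (N + 1), Real.exp (S k ω * μk k * (Q k z - 1)) ∂P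
          = ((α j + 1) / α j) * Gstress α (α + 2 • unitVec j) μk Q z) := by
  have key := integral_prod_pow_mul_prod_exp_eq_Gstress measS hS0 hSind hα hgamma hμ
    (fun k => (hQ k z hz).2)
  have single_le_one : ∀ j k : Fin N, (Pi.single j 1 : Fin N → ℕ) k ≤ 1 := fun j k => by
    rw [Pi.single_apply]; split_ifs <;> simp
  refine ⟨?_, fun j => ?_, fun i j hij => ?_, fun j => ?_⟩
  · simpa [hS0, prod_gammaMoment_self_eq_one hα, ← Pi.zero_def] using key 0
  · have := key (Pi.single j 1)
    simp only [prod_pow_single, pow_one, natCast_single_eq_nsmul_unitVec, one_smul,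
      prod_gammaMoment_self_eq_one hα (single_le_one j), one_mul] at this
    simpa [hS0] using this
  · have hm : ∀ k, (Pi.single i 1 + Pi.single j 1 : Fin N → ℕ) k ≤ 1 := fun k => by
      simp only [Pi.add_apply, Pi.single_apply]; split_ifs <;> simp_all
    have hvec : (fun k => ((Pi.single i 1 + Pi.single j 1 : Fin N → ℕ) k : ℝ))
        = unitVec i + unitVec j := by
      ext k
      simp [unitVec, Pi.single_apply]
    have := key (Pi.single i 1 + Pi.single j 1)
    rw [prod_gammaMoment_self_eq_one hα hm, one_mul, hvec, ← add_assoc] at this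
    simpa only [Pi.add_apply, pow_add, prod_mul_distrib, prod_pow_single, pow_one] using this
  · have := key (Pi.single j 2)
    simp only [prod_pow_single, natCast_single_eq_nsmul_unitVec] at this
    rw [prod_eq_single j (fun k _ hk => by rw [Pi.single_eq_of_ne hk, gammaMoment_zero (hα k)])
      (by simp), Pi.single_eq_same, gammaMoment_two (hα j)] at this
    exact this

/-- The mixed second moments of the Gamma factors against
`∏ k, exp (S_k μ_k (Q_k z - 1))` produce the stressed generating functions:
`𝔼[S₀² ∏ₖ ...] = G_X^(α)(z)`, `𝔼[S₀ S_j ∏ₖ ...] = G_X^(α+e_j)(z)`,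
`𝔼[S_i S_j ∏ₖ ...] = G_X^(α+e_i+e_j)(z)` for `i ≠ j`, and
`𝔼[S_j² ∏ₖ ...] = ((α_j+1)/α_j) G_X^(α+2e_j)(z)`. -/
theorem factor_moments_stressed_pgf
    {Ω : Type} [MeasurableSpace Ω] (P : Measure Ω) [IsProbabilityMeasure P]
    {N : ℕ} (hN : 1 ≤ N) (S : Fin (N + 1) → Ω → ℝ)
    (measS : ∀ k, Measurable (S k)) (hS0 : ∀ ω, S 0 ω = 1)
    (hSind : iIndepFun S P)
    (α : Fin N → ℝ) (hα : ∀ k, 0 < α k)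
    (hgamma : ∀ k : Fin N, P.map (S k.succ) = gammaMeasure (α k) (α k))
    (μk : Fin (N + 1) → ℝ) (hμ : ∀ k, 0 < μk k)
    (Q : Fin (N + 1) → ℝ → ℝ)
    (hQ : ∀ k z, z ∈ Set.Icc (0 : ℝ) 1 → Q k z ∈ Set.Icc (0 : ℝ) 1)
    (z : ℝ) (hz : z ∈ Set.Icc (0 : ℝ) 1) :
    (∫ ω, S 0 ω ^ 2 * ∏ k : Fin (N + 1), Real.exp (S k ω * μk k * (Q k z - 1)) ∂P
        = Gstress α α μk Q z)
    ∧ (∀ j : Fin N,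
        ∫ ω, S 0 ω * S j.succ ω
            * ∏ k : Fin (N + 1), Real.exp (S k ω * μk k * (Q k z - 1)) ∂P
          = Gstress α (α + unitVec j) μk Q z)
    ∧ (∀ i j : Fin N, i ≠ j →
        ∫ ω, S i.succ ω * S j.succ ω
            * ∏ k : Fin (N + 1), Real.exp (S k ω * μk k * (Q k z - 1)) ∂P
          = Gstress α (α + unitVec i + unitVec j) μk Q z)
    ∧ (∀ j : Fin N,
        ∫ ω, S j.succ ω ^ 2
            * ∏ k : Fin (N + 1), Real.exp (S k ω * μk k * (Q k z - 1)) ∂P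
          = ((α j + 1) / α j) * Gstress α (α + 2 • unitVec j) μk Q z) :=
  factor_moments_stressed_pgf_general P S measS hS0 hSind α hα hgamma μk hμ Q hQ z hz
end
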